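/- The generating function A(t) for the number of 321-avoiding permutations of length n satisfies t·A(t)² − A(t) + 1 = 0, where A(t) = Σ_n c_n tⁿ and c_n is the number of 321-avoiding permutations of {1,...,n}. -/

import Mathlib

/-!
Read a permutation of `{0, …, n-1}` as the list of its values. Inserting the new maximum `n`
into a list `v` at position `j` creates a 321 pattern exactly when `v` already has one or the
entries of `v` after position `j` are not increasing, and every permutation of `{0, …, n}` arises
from exactly one such insertion. So if `e(n, i)` counts, for `i ≤ n`, the 321-avoiders of length
`n` whose entries from position `i` on increase, and `e(n, n + 1) = 0`, then for `i ≤ n + 1`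
`e(n + 1, i) = Σ_{j < i} e(n, j) + e(n, i)`: inserting at `j < i` keeps the tail from `i`
increasing, inserting at `j ≥ i` does so only at the very end.
This is the recurrence of the ballot numbers, `e(n, i) = C(n+i, i) - C(n+i, n+1)`, and on the
diagonal it gives the Catalan numbers, whose generating function satisfies the quadratic equation.
-/

def Avoids321 {n : ℕ} (π : Equiv.Perm (Fin n)) : Prop :=
  ¬ ∃ i j k : Fin n, i < j ∧ j < k ∧ π k < π j ∧ π j < π i

open Finset

namespace List

variable {α : Type*}

def Avoids321 [LT α] (l : List α) : Prop :=
  ¬ ∃ a b c, c < b ∧ b < a ∧ [a, b, c] <+ l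

theorem Avoids321.sublist [LT α] {l l' : List α} (h : l.Avoids321) (hl : l' <+ l) :
    l'.Avoids321 :=
  fun ⟨a, b, c, hcb, hba, hs⟩ => h ⟨a, b, c, hcb, hba, hs.trans hl⟩

theorem avoids321_append_cons_iff [LinearOrder α] {L R : List α} {m : α}
    (hm : ∀ x ∈ L ++ R, x < m) :
    (L ++ m :: R).Avoids321 ↔ (L ++ R).Avoids321 ∧ R.Pairwise (· ≤ ·) := by
  constructor
  · intro h
    refine ⟨h.sublist (by simp), pairwise_iff_forall_sublist.mpr fun {a b} hab => ?_⟩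
    by_contra! hba
    exact h ⟨m, a, b, hba, hm a (by simp [hab.subset (by simp : a ∈ [a, b])]),
      (cons_sublist_cons.mpr hab).trans (sublist_append_right L _)⟩
  · rintro ⟨h, hR⟩ ⟨a, b, c, hcb, hba, hs⟩
    obtain ⟨l₁, l₂, hl, hl₁, hl₂⟩ := sublist_append_iff.mp hs
    rcases sublist_cons_iff.mp hl₂ with hl₂ | ⟨r, rfl, hr⟩
    · exact h ⟨a, b, c, hcb, hba, hl ▸ hl₁.append hl₂⟩
    · match l₁, hl with
      | [], hl =>
        obtain ⟨-, rfl⟩ : a = m ∧ [b, c] = r := by simpa using hl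
        exact (rel_of_pairwise_cons (hR.sublist hr) (mem_singleton_self c)).not_gt hcb
      | x :: t, hl =>
        obtain ⟨rfl, hbc⟩ : a = x ∧ [b, c] = t ++ m :: r := by simpa using hl
        have hmbc : m ∈ [b, c] := hbc ▸ mem_append_right t mem_cons_self
        have ham : a < m := hm a (mem_append_left R (hl₁.subset mem_cons_self))
        simp only [mem_cons, not_mem_nil, or_false] at hmbc
        rcases hmbc with rfl | rfl <;> order

theorem pairwise_le_drop_append_cons_iff [LinearOrder α] {L R : List α} {m : α}
    (hm : ∀ x ∈ L ++ R, x < m) {i : ℕ} (hi : i ≤ L.length) :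
    ((L ++ m :: R).drop i).Pairwise (· ≤ ·) ↔ R = [] ∧ (L.drop i).Pairwise (· ≤ ·) := by
  rw [drop_append_of_le_length hi, pairwise_append, pairwise_cons]
  constructor
  · rintro ⟨hL, ⟨hmR, -⟩, -⟩
    refine ⟨eq_nil_iff_forall_not_mem.mpr fun x hx => ?_, hL⟩
    exact (hmR x hx).not_gt (hm x (mem_append_right L hx))
  · rintro ⟨rfl, hL⟩
    refine ⟨hL, by simp, fun a ha b hb => ?_⟩
    obtain rfl : b = m := by simpa using hb
    exact (hm a (by simp [(drop_subset i L) ha])).le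

theorem drop_append_cons_sublist {L R : List α} {m : α} {i : ℕ} (hi : L.length < i) :
    (L ++ m :: R).drop i <+ R := by
  obtain ⟨k, rfl⟩ := Nat.exists_eq_add_of_lt hi
  rw [Nat.add_assoc, ← drop_drop, drop_left, Nat.add_comm, ← drop_drop, drop_one, tail_cons]
  exact drop_sublist _ _

theorem insertIdx_length_append (L R : List α) (a : α) :
    (L ++ R).insertIdx L.length a = L ++ a :: R :=
  modifyTailIdx_add (cons a) 0 L R

theorem exists_insertIdx_eq_append_cons {v : List α} {j : ℕ} (hj : j ≤ v.length) (a : α) :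
    ∃ L R, v = L ++ R ∧ L.length = j ∧ v.insertIdx j a = L ++ a :: R :=
  exists_of_modifyTailIdx (cons a) hj

theorem erase_insertIdx_of_notMem [DecidableEq α] {a : α} {v : List α} (hv : a ∉ v) {j : ℕ}
    (hj : j ≤ v.length) : (v.insertIdx j a).erase a = v := by
  obtain ⟨L, R, rfl, -, h⟩ := exists_insertIdx_eq_append_cons hj a
  rw [h, erase_append_right _ fun h => hv (mem_append_left R h), erase_cons_head]

theorem insertIdx_inj_of_notMem {a : α} {v v' : List α} {j j' : ℕ} (hv : a ∉ v) (hv' : a ∉ v')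
    (hj : j ≤ v.length) (hj' : j' ≤ v'.length) (h : v.insertIdx j a = v'.insertIdx j' a) :
    j = j' ∧ v = v' := by
  classical
  obtain rfl : v = v' := by
    rw [← erase_insertIdx_of_notMem hv hj, ← erase_insertIdx_of_notMem hv' hj', h]
  exact ⟨injOn_insertIdx_index_of_notMem v a hv hj hj' h, rfl⟩

theorem cons_cons_singleton_sublist_ofFn_iff {n : ℕ} {f : Fin n → α} {a b c : α} :
    [a, b, c] <+ ofFn f ↔ ∃ i j k, i < j ∧ j < k ∧ f i = a ∧ f j = b ∧ f k = c := by
  rw [ofFn_eq_map, sublist_map_iff]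
  constructor
  · rintro ⟨l, hl, hmap⟩
    obtain ⟨i, j, k, rfl⟩ := length_eq_three.mp (by simpa using (congrArg length hmap).symm)
    obtain ⟨rfl, rfl, rfl⟩ : a = f i ∧ b = f j ∧ c = f k := by simpa using hmap
    have hijk := (pairwise_lt_finRange n).sublist hl
    simp only [pairwise_cons, mem_cons] at hijk
    exact ⟨i, j, k, hijk.1 j (by simp), hijk.2.1 k (by simp), rfl, rfl, rfl⟩
  · rintro ⟨i, j, k, hij, hjk, rfl, rfl, rfl⟩
    have hs : [i, j, k].Pairwise (· < ·) := by simp [hij, hjk, hij.trans hjk]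
    refine ⟨[i, j, k], sublist_of_subperm_of_pairwise ?_ hs (pairwise_lt_finRange n), rfl⟩
    exact subperm_of_subset hs.nodup fun x _ => mem_finRange x

end List

theorem avoids321_ofFn_iff {n : ℕ} (π : Equiv.Perm (Fin n)) :
    (List.ofFn fun i => (π i : ℕ)).Avoids321 ↔ Avoids321 π := by
  simp only [List.Avoids321, Avoids321, List.cons_cons_singleton_sublist_ofFn_iff]
  refine not_congr ⟨?_, ?_⟩
  · rintro ⟨-, -, -, hcb, hba, i, j, k, hij, hjk, rfl, rfl, rfl⟩
    exact ⟨i, j, k, hij, hjk, hcb, hba⟩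
  · rintro ⟨i, j, k, hij, hjk, hkj, hji⟩
    exact ⟨_, _, _, hkj, hji, i, j, k, hij, hjk, rfl, rfl, rfl⟩

theorem ofFn_val_perm_injective (n : ℕ) :
    Function.Injective fun π : Equiv.Perm (Fin n) => List.ofFn fun i => (π i : ℕ) :=
  fun _ _ h => Equiv.ext fun i => Fin.val_injective (congrFun (List.ofFn_injective h) i)

theorem image_ofFn_univ_perm (n : ℕ) :
    (univ : Finset (Equiv.Perm (Fin n))).image (fun π => List.ofFn fun i => (π i : ℕ)) =
      (List.range n).permutations.toFinset := by
  refine eq_of_subset_of_card_le (fun l => ?_) ?_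
  · simp only [mem_image, mem_univ, true_and, List.mem_toFinset, List.mem_permutations]
    rintro ⟨π, rfl⟩
    have hnd : (List.ofFn fun i => (π i : ℕ)).Nodup :=
      List.nodup_ofFn.mpr (Fin.val_injective.comp π.injective)
    rw [List.perm_ext_iff_of_nodup hnd List.nodup_range]
    intro x
    simp only [List.mem_ofFn, List.mem_range]
    exact ⟨fun ⟨i, hi⟩ => hi ▸ (π i).isLt, fun hx => ⟨π.symm ⟨x, hx⟩, by simp⟩⟩
  · rw [List.toFinset_card_of_nodup (List.nodup_permutations _ List.nodup_range)]
    simp [card_image_of_injective _ (ofFn_val_perm_injective n), List.length_permutations,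
      Fintype.card_perm]

open scoped Classical in
noncomputable def avoiders (n : ℕ) : Finset (List ℕ) :=
  {l ∈ (List.range n).permutations.toFinset | l.Avoids321}

/- Its cardinality is `e(n, i)`; the clause `i ≤ n` encodes `e(n, n + 1) = 0`. -/
open scoped Classical in
noncomputable def avoidersActiveAt (n i : ℕ) : Finset (List ℕ) :=
  {v ∈ avoiders n | i ≤ n ∧ (v.drop i).Pairwise (· ≤ ·)}

theorem mem_avoiders {n : ℕ} {l : List ℕ} :
    l ∈ avoiders n ↔ l.Perm (List.range n) ∧ l.Avoids321 := by
  simp [avoiders, List.mem_permutations]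

theorem mem_avoidersActiveAt {n i : ℕ} {v : List ℕ} :
    v ∈ avoidersActiveAt n i ↔
      (v.Perm (List.range n) ∧ v.Avoids321) ∧ i ≤ n ∧ (v.drop i).Pairwise (· ≤ ·) := by
  simp [avoidersActiveAt, mem_avoiders]

theorem natCard_avoids321_eq_card_avoiders (n : ℕ) :
    Nat.card {π : Equiv.Perm (Fin n) // Avoids321 π} = #(avoiders n) := by
  classical
  rw [Nat.card_eq_fintype_card, Fintype.card_subtype, avoiders, ← image_ofFn_univ_perm,
    filter_image, card_image_of_injective _ (ofFn_val_perm_injective n)]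
  simp only [avoids321_ofFn_iff]

theorem append_cons_perm_range_succ_iff {L R : List ℕ} {n : ℕ} :
    (L ++ n :: R).Perm (List.range (n + 1)) ↔ (L ++ R).Perm (List.range n) := by
  rw [List.range_succ]
  constructor <;> intro h
  · exact (List.perm_middle.symm.trans (h.trans (List.perm_append_singleton n _))).cons_inv
  · exact List.perm_middle.trans ((h.cons n).trans (List.perm_append_singleton n _).symm)

theorem exists_eq_insertIdx_of_perm_range_succ {n : ℕ} {w : List ℕ}
    (hw : w.Perm (List.range (n + 1))) :
    ∃ j ≤ n, ∃ v : List ℕ, v.Perm (List.range n) ∧ w = v.insertIdx j n := by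
  obtain ⟨L, R, rfl⟩ := List.append_of_mem (hw.mem_iff.mpr List.self_mem_range_succ)
  have hv := append_cons_perm_range_succ_iff.mp hw
  have hlen : L.length + R.length = n := by simpa using hv.length_eq
  exact ⟨L.length, by omega, L ++ R, hv, (List.insertIdx_length_append L R n).symm⟩

theorem insertIdx_inj_of_perm_range {n j j' : ℕ} {v v' : List ℕ} (hv : v.Perm (List.range n))
    (hv' : v'.Perm (List.range n)) (hj : j ≤ n) (hj' : j' ≤ n)
    (h : v.insertIdx j n = v'.insertIdx j' n) : j = j' ∧ v = v' :=
  List.insertIdx_inj_of_notMem (by simp [hv.mem_iff]) (by simp [hv'.mem_iff])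
    (by simpa [hv.length_eq]) (by simpa [hv'.length_eq]) h

theorem insertIdx_mem_avoidersActiveAt_succ_iff {n i j : ℕ} {v : List ℕ}
    (hv : v.Perm (List.range n)) (hj : j ≤ n) (hi : i ≤ n + 1) :
    v.insertIdx j n ∈ avoidersActiveAt (n + 1) i ↔
      (j < i ∧ v ∈ avoidersActiveAt n j) ∨ (j = n ∧ v ∈ avoidersActiveAt n i) := by
  have hlt : ∀ x ∈ v, x < n := fun x hx => List.mem_range.mp (hv.subset hx)
  obtain ⟨L, R, rfl, rfl, hins⟩ :=
    List.exists_insertIdx_eq_append_cons (v := v) (j := j) (by simpa [hv.length_eq]) n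
  have hlen : L.length + R.length = n := by simpa using hv.length_eq
  simp only [mem_avoidersActiveAt, hins, append_cons_perm_range_succ_iff, hv, true_and, hi, hj,
    List.drop_left, List.avoids321_append_cons_iff hlt]
  rcases Nat.lt_or_ge L.length i with hLi | hiL
  · constructor
    · rintro ⟨hvR, -⟩
      exact .inl ⟨hLi, hvR⟩
    · rintro (⟨-, hvR⟩ | ⟨hLn, -, hin, -⟩)
      · exact ⟨hvR, hvR.2.sublist (List.drop_append_cons_sublist hLi)⟩
      · omega
  · have hRn : R = [] ↔ L.length = n := by
      rw [← List.length_eq_zero_iff]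
      omega
    rw [List.pairwise_le_drop_append_cons_iff hlt hiL]
    constructor
    · rintro ⟨⟨hv, -⟩, rfl, hL⟩
      exact .inr ⟨hRn.mp rfl, hv, hiL.trans hj, by simpa using hL⟩
    · rintro (⟨hLi, -⟩ | ⟨hLn, hv, -, hL⟩)
      · omega
      · obtain rfl := hRn.mpr hLn
        exact ⟨⟨hv, List.Pairwise.nil⟩, rfl, by simpa using hL⟩
theorem avoidersActiveAt_succ_eq {n i : ℕ} (hi : i ≤ n + 1) :
    avoidersActiveAt (n + 1) i =
      (range i).biUnion (fun j => (avoidersActiveAt n j).image (·.insertIdx j n)) ∪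
        (avoidersActiveAt n i).image (·.insertIdx n n) := by
  ext w
  simp only [mem_union, mem_biUnion, mem_range, mem_image]
  constructor
  · intro hw
    obtain ⟨j, hj, v, hv, rfl⟩ :=
      exists_eq_insertIdx_of_perm_range_succ (mem_avoidersActiveAt.mp hw).1.1
    rcases (insertIdx_mem_avoidersActiveAt_succ_iff hv hj hi).mp hw with ⟨hji, hv⟩ | ⟨rfl, hv⟩
    · exact .inl ⟨j, hji, v, hv, rfl⟩
    · exact .inr ⟨v, hv, rfl⟩
  · rintro (⟨j, hji, v, hv, rfl⟩ | ⟨v, hv, rfl⟩) <;> have hv' := mem_avoidersActiveAt.mp hv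
    · exact (insertIdx_mem_avoidersActiveAt_succ_iff hv'.1.1 hv'.2.1 hi).mpr (.inl ⟨hji, hv⟩)
    · exact (insertIdx_mem_avoidersActiveAt_succ_iff hv'.1.1 le_rfl hi).mpr (.inr ⟨rfl, hv⟩)

theorem card_avoidersActiveAt_succ {n i : ℕ} (hi : i ≤ n + 1) :
    #(avoidersActiveAt (n + 1) i) =
      ∑ j ∈ range i, #(avoidersActiveAt n j) + #(avoidersActiveAt n i) := by
  have inj {j j' q q' : ℕ} {v v' : List ℕ} (hv : v ∈ avoidersActiveAt n q)
      (hv' : v' ∈ avoidersActiveAt n q') (hj : j ≤ n) (hj' : j' ≤ n)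
      (h : v.insertIdx j n = v'.insertIdx j' n) : j = j' ∧ v = v' :=
    insertIdx_inj_of_perm_range (mem_avoidersActiveAt.mp hv).1.1
      (mem_avoidersActiveAt.mp hv').1.1 hj hj' h
  have le_of_mem {j : ℕ} {v : List ℕ} (hv : v ∈ avoidersActiveAt n j) : j ≤ n :=
    (mem_avoidersActiveAt.mp hv).2.1
  rw [avoidersActiveAt_succ_eq hi, card_union_of_disjoint, card_biUnion]
  · congr 1
    · exact sum_congr rfl fun j _ => card_image_of_injOn fun v hv v' hv' h =>
        (inj hv hv' (le_of_mem hv) (le_of_mem hv) h).2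
    · exact card_image_of_injOn fun v hv v' hv' h => (inj hv hv' le_rfl le_rfl h).2
  · intro j _ j' _ hne
    simp only [Function.onFun, disjoint_left, mem_image]
    rintro _ ⟨v, hv, rfl⟩ ⟨v', hv', h⟩
    exact hne (inj hv' hv (le_of_mem hv') (le_of_mem hv) h).1.symm
  · simp only [disjoint_left, mem_biUnion, mem_range, mem_image]
    rintro _ ⟨j, hji, v, hv, rfl⟩ ⟨v', hv', h⟩
    have hjn := (inj hv' hv le_rfl (le_of_mem hv) h).1
    have hin := le_of_mem hv'
    omega

theorem card_avoidersActiveAt_zero_zero : #(avoidersActiveAt 0 0) = 1 := by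
  rw [card_eq_one]
  refine ⟨[], eq_singleton_iff_unique_mem.mpr ⟨?_, fun v hv => ?_⟩⟩
  · simp [mem_avoidersActiveAt, List.Avoids321]
  · simpa using (mem_avoidersActiveAt.mp hv).1.1

theorem avoidersActiveAt_succ_self (n : ℕ) : avoidersActiveAt n (n + 1) = ∅ := by
  ext v
  simp [mem_avoidersActiveAt]

theorem avoidersActiveAt_self (n : ℕ) : avoidersActiveAt n n = avoiders n := by
  ext v
  simp only [mem_avoidersActiveAt, mem_avoiders, le_refl, true_and, and_iff_left_iff_imp]
  rintro ⟨hv, -⟩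
  rw [List.drop_eq_nil_of_le (by simp [hv.length_eq])]
  exact List.Pairwise.nil

theorem card_avoidersActiveAt_add_choose {n i : ℕ} (hi : i ≤ n + 1) :
    #(avoidersActiveAt n i) + (n + i).choose (n + 1) = (n + i).choose i := by
  induction n generalizing i with
  | zero =>
    interval_cases i
    · simp [card_avoidersActiveAt_zero_zero]
    · simp [avoidersActiveAt_succ_self]
  | succ n ih =>
    induction i with
    | zero =>
      have h := ih (Nat.zero_le _)
      simp only [card_avoidersActiveAt_succ (Nat.zero_le _), sum_range_zero] at h ⊢
      simpa using h
    | succ i ih' =>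
      rcases Nat.lt_or_ge i (n + 1) with hin | hin
      · have hrec := card_avoidersActiveAt_succ (n := n) (i := i + 1) (by omega)
        rw [sum_range_succ, ← card_avoidersActiveAt_succ (by omega)] at hrec
        have h₁ := ih' (by omega)
        have h₂ := ih (i := i + 1) (by omega)
        have hpascal₁ := Nat.choose_succ_succ' (n + i + 1) (n + 1)
        have hpascal₂ := Nat.choose_succ_succ' (n + i + 1) i
        simp only [show n + 1 + (i + 1) = n + i + 1 + 1 by ring, show n + 1 + i = n + i + 1 by ring,
          show n + (i + 1) = n + i + 1 by ring] at hrec h₁ h₂ ⊢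
        omega
      · obtain rfl : i = n + 1 := by omega
        simp [avoidersActiveAt_succ_self]

theorem card_avoiders_eq_catalan (n : ℕ) : #(avoiders n) = catalan n := by
  have h := card_avoidersActiveAt_add_choose (n := n) (i := n) (by omega)
  rw [avoidersActiveAt_self] at h
  have hsucc := Nat.choose_succ_right_eq (n + n) n
  have hcat := succ_mul_catalan_eq_centralBinom n
  rw [Nat.centralBinom_eq_two_mul_choose, two_mul] at hcat
  rw [Nat.add_sub_cancel] at hsucc
  refine Nat.eq_of_mul_eq_mul_left n.succ_pos ?_
  nlinarith

theorem natCard_avoids321_eq_catalan (n : ℕ) :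
    Nat.card {π : Equiv.Perm (Fin n) // Avoids321 π} = catalan n := by
  rw [natCard_avoids321_eq_card_avoiders, card_avoiders_eq_catalan]

/-- The generating function `A(t) = Σ c_n tⁿ`, where `c_n` is the number of
321-avoiding permutations of `{1,...,n}`, satisfies `t A(t)² − A(t) + 1 = 0`. -/
theorem avoids321_gf_quadratic :
    (PowerSeries.X : PowerSeries ℚ) *
        (PowerSeries.mk fun n => (Nat.card {π : Equiv.Perm (Fin n) // Avoids321 π} : ℚ)) ^ 2 -
      (PowerSeries.mk fun n => (Nat.card {π : Equiv.Perm (Fin n) // Avoids321 π} : ℚ)) + 1 = 0 := by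
  have hA : (PowerSeries.mk fun n => (Nat.card {π : Equiv.Perm (Fin n) // Avoids321 π} : ℚ)) =
      PowerSeries.map (Nat.castRingHom ℚ) PowerSeries.catalanSeries := by
    ext n
    simp [natCard_avoids321_eq_catalan]
  have h := congrArg (PowerSeries.map (Nat.castRingHom ℚ))
    PowerSeries.catalanSeries_sq_mul_X_add_one
  simp only [map_add, map_mul, map_pow, PowerSeries.map_X, map_one] at h
  rw [hA]
  linear_combination h
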